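/- arXiv:1404.0068 — 7 statements merged into one kernel-verified Lean document; each statement's English description precedes it below -/
import Mathlib

section
/- Let H be a real Hilbert space, T > 0, K ∈ ℕ with K ≥ 1, τ = T/K, t_k = kτ, γ ∈ (0,1), and a_j = (j+1)^{1-γ} - j^{1-γ} for j ≥ 0. Suppose U^0, U^1, …, U^K ∈ H and nonnegative real numbers β_1, …, β_K and φ_1, …, φ_K satisfy, for every 0 ≤ k ≤ K-1, the inequality (Γ(2-γ) τ^γ)^{-1} ⟨ Σ_{j=0}^{k} a_j (U^{k+1-j} - U^{k-j}), U^{k+1} ⟩_H + β_{k+1}^2 ≤ φ_{k+1} β_{k+1}. Then (τ^{1-γ}/Γ(2-γ)) Σ_{j=0}^{K-1} a_j ‖U^{K-j}‖_H^2 + τ Σ_{k=1}^{K} β_k^2 ≤ (T^{1-γ}/Γ(2-γ)) ‖U^0‖_H^2 + τ Σ_{k=1}^{K} φ_k^2. (This is the unconditional stability of the implicit time-discretization of a fractional evolution problem ∂_t^γ u + 𝔉u = f in a Hilbert-space setting, with β_k playing the role of the energy norm ‖U^k‖_V = ⟨𝔉U^k,U^k⟩^{1/2} and φ_k the role of the dual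 norm ‖f^k‖_{V'}.) -/
/-!
Summation by parts rewrites `∑_{j ≤ k} a_j (U^{k+1-j} - U^{k-j})` as
`∑_{j ≤ k} b_j (U^{k+1} - U^{k-j})` with `b_j = a_j - a_{j+1}` (`j < k`), `b_k = a_k`; these weights
are nonnegative because `j ↦ (j+1)^(1-γ) - j^(1-γ)` is nonincreasing by concavity of `x ↦ x^(1-γ)`.
Since `2⟪x - y, x⟫ ≥ ‖x‖² - ‖y‖²`, twice the inner product with `U^{k+1}` dominates the same
difference operator applied to `‖U‖²`, which telescopes when summed over `k`. Young's inequality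
`2φβ ≤ φ² + β²` absorbs the right-hand side, and `∑_{j<K} a_j = K^(1-γ)` together with
`τ K = T` gives the constants.
-/

open MeasureTheory Real Set
open scoped RealInnerProductSpace

/-- With `a j = (j+1)^(1-γ) - j^(1-γ)` this is `Γ(2-γ) τ^γ δ^γ V^{k+1}`. -/
def caputoDiff {M : Type*} [AddCommGroup M] [Module ℝ M] (a : ℕ → ℝ) (V : ℕ → M) (k : ℕ) : M :=
  ∑ j ∈ Finset.range (k + 1), a j • (V (k + 1 - j) - V (k - j))

theorem sum_range_succ_smul_sub_succ {M : Type*} [AddCommGroup M] [Module ℝ M]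
    (a : ℕ → ℝ) (V : ℕ → M) (n : ℕ) :
    ∑ j ∈ Finset.range (n + 1), a j • (V j - V (j + 1)) =
      ∑ j ∈ Finset.range n, (a j - a (j + 1)) • (V 0 - V (j + 1)) + a n • (V 0 - V (n + 1)) := by
  induction n with
  | zero => simp
  | succ n ih =>
    rw [Finset.sum_range_succ, ih, Finset.sum_range_succ]
    module

theorem caputoDiff_eq_sum_sub_smul {M : Type*} [AddCommGroup M] [Module ℝ M]
    (a : ℕ → ℝ) (U : ℕ → M) (k : ℕ) :
    caputoDiff a U k =
      ∑ j ∈ Finset.range k, (a j - a (j + 1)) • (U (k + 1) - U (k - j))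
        + a k • (U (k + 1) - U 0) := by
  have := sum_range_succ_smul_sub_succ a (fun j => U (k + 1 - j)) k
  simp only [Nat.add_sub_add_right, Nat.sub_zero, Nat.sub_self] at this
  exact this

theorem sq_norm_sub_sq_norm_le_two_inner {H : Type*} [NormedAddCommGroup H]
    [InnerProductSpace ℝ H] (x y : H) : ‖x‖ ^ 2 - ‖y‖ ^ 2 ≤ 2 * ⟪x - y, x⟫ := by
  have := norm_sub_sq_real x y
  rw [inner_sub_left, real_inner_self_eq_norm_sq, real_inner_comm]
  nlinarith [sq_nonneg ‖x - y‖]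

theorem caputoDiff_sq_norm_le_two_inner {H : Type*} [NormedAddCommGroup H]
    [InnerProductSpace ℝ H] {a : ℕ → ℝ} (ha : Antitone a) {k : ℕ} (hak : 0 ≤ a k) (U : ℕ → H) :
    caputoDiff a (fun n => ‖U n‖ ^ 2) k ≤ 2 * ⟪caputoDiff a U k, U (k + 1)⟫ := by
  rw [caputoDiff_eq_sum_sub_smul, caputoDiff_eq_sum_sub_smul, inner_add_left, sum_inner,
    mul_add, Finset.mul_sum]
  simp only [smul_eq_mul, real_inner_smul_left, mul_left_comm (2 : ℝ)]
  exact add_le_add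
    (Finset.sum_le_sum fun j _ => mul_le_mul_of_nonneg_left
      (sq_norm_sub_sq_norm_le_two_inner _ _) (sub_nonneg.2 (ha j.le_succ)))
    (mul_le_mul_of_nonneg_left (sq_norm_sub_sq_norm_le_two_inner _ _) hak)

theorem caputoDiff_eq_sub {a : ℕ → ℝ} (V : ℕ → ℝ) (k : ℕ) :
    caputoDiff a V k = ∑ j ∈ Finset.range (k + 1), a j * V (k + 1 - j)
      - ∑ j ∈ Finset.range k, a j * V (k - j) - a k * V 0 := by
  simp only [caputoDiff, smul_eq_mul, mul_sub, Finset.sum_sub_distrib,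
    Finset.sum_range_succ (fun j => a j * V (k - j)), Nat.sub_self]
  ring

theorem sum_range_caputoDiff (a : ℕ → ℝ) (V : ℕ → ℝ) (n : ℕ) :
    ∑ k ∈ Finset.range n, caputoDiff a V k =
      ∑ j ∈ Finset.range n, a j * V (n - j) - (∑ j ∈ Finset.range n, a j) * V 0 := by
  induction n with
  | zero => simp
  | succ n ih =>
    rw [Finset.sum_range_succ, ih, caputoDiff_eq_sub, Finset.sum_range_succ a]
    ring

theorem caputoDiff_scheme_energy_le {H : Type*} [NormedAddCommGroup H]
    [InnerProductSpace ℝ H] {a : ℕ → ℝ} (ha : Antitone a) (ha₀ : ∀ j, 0 ≤ a j) {c : ℝ} (hc : 0 < c)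
    (U : ℕ → H) (β φ : ℕ → ℝ) (K : ℕ)
    (h : ∀ k < K, c⁻¹ * ⟪caputoDiff a U k, U (k + 1)⟫ + β (k + 1) ^ 2 ≤ φ (k + 1) * β (k + 1)) :
    ∑ j ∈ Finset.range K, a j * ‖U (K - j)‖ ^ 2 + c * ∑ k ∈ Finset.range K, β (k + 1) ^ 2
      ≤ (∑ j ∈ Finset.range K, a j) * ‖U 0‖ ^ 2 + c * ∑ k ∈ Finset.range K, φ (k + 1) ^ 2 := by
  have step : ∀ k < K,
      caputoDiff a (fun n => ‖U n‖ ^ 2) k + c * β (k + 1) ^ 2 ≤ c * φ (k + 1) ^ 2 := by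
    intro k hk
    have hinner : 2 * ⟪caputoDiff a U k, U (k + 1)⟫
        ≤ c * (2 * (φ (k + 1) * β (k + 1) - β (k + 1) ^ 2)) := by
      have := h k hk
      rw [← inv_mul_le_iff₀ hc]
      linarith
    nlinarith [caputoDiff_sq_norm_le_two_inner ha (ha₀ k) U, sq_nonneg (φ (k + 1) - β (k + 1))]
  have := Finset.sum_le_sum fun k hk => step k (Finset.mem_range.1 hk)
  rw [Finset.sum_add_distrib, sum_range_caputoDiff, ← Finset.mul_sum, ← Finset.mul_sum] at this
  linarith

theorem antitone_rpow_succ_sub_rpow {p : ℝ} (hp₀ : 0 ≤ p) (hp₁ : p ≤ 1) :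
    Antitone fun j : ℕ => ((j : ℝ) + 1) ^ p - (j : ℝ) ^ p := by
  refine antitone_nat_of_succ_le fun j => ?_
  have := (Real.concaveOn_rpow hp₀ hp₁).slope_anti_adjacent (x := j) (y := j + 1) (z := j + 1 + 1)
    (Set.mem_Ici.2 (Nat.cast_nonneg j)) (Set.mem_Ici.2 (by positivity)) (by linarith) (by linarith)
  push_cast
  simpa using this

theorem rpow_succ_sub_rpow_nonneg {p : ℝ} (hp : 0 ≤ p) (j : ℕ) :
    0 ≤ ((j : ℝ) + 1) ^ p - (j : ℝ) ^ p :=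
  sub_nonneg.2 (Real.rpow_le_rpow (Nat.cast_nonneg j) (by linarith) hp)

theorem sum_range_rpow_succ_sub_rpow {p : ℝ} (hp : p ≠ 0) (n : ℕ) :
    ∑ j ∈ Finset.range n, (((j : ℝ) + 1) ^ p - (j : ℝ) ^ p) = (n : ℝ) ^ p := by
  simpa [Real.zero_rpow hp] using Finset.sum_range_sub (fun j : ℕ => (j : ℝ) ^ p) n

theorem sum_Icc_one_eq_sum_range_succ {M : Type*} [AddCommMonoid M] (f : ℕ → M) (n : ℕ) :
    ∑ k ∈ Finset.Icc 1 n, f k = ∑ k ∈ Finset.range n, f (k + 1) := by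
  rw [Finset.range_eq_Ico, Finset.sum_Ico_add' f 0 n 1]
  rfl

theorem fractional_scheme_unconditional_stability_general
    {H : Type*} [NormedAddCommGroup H] [InnerProductSpace ℝ H]
    (T : ℝ) (hT : 0 < T) (K : ℕ) (hK : 1 ≤ K)
    (γ : ℝ) (hγ : γ ∈ Set.Ioo (0 : ℝ) 1)
    (τ : ℝ) (hτ : τ = T / K)
    (a : ℕ → ℝ) (ha : ∀ j : ℕ, a j = ((j : ℝ) + 1) ^ (1 - γ) - (j : ℝ) ^ (1 - γ))
    (U : ℕ → H) (β φ : ℕ → ℝ)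
    (hineq : ∀ k < K,
      (Real.Gamma (2 - γ) * τ ^ γ)⁻¹ *
          ⟪∑ j ∈ Finset.range (k + 1), a j • (U (k + 1 - j) - U (k - j)), U (k + 1)⟫
        + β (k + 1) ^ 2 ≤ φ (k + 1) * β (k + 1)) :
    τ ^ (1 - γ) / Real.Gamma (2 - γ) *
        ∑ j ∈ Finset.range K, a j * ‖U (K - j)‖ ^ 2
      + τ * ∑ k ∈ Finset.Icc 1 K, β k ^ 2
    ≤ T ^ (1 - γ) / Real.Gamma (2 - γ) * ‖U 0‖ ^ 2
      + τ * ∑ k ∈ Finset.Icc 1 K, φ k ^ 2 := by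
  obtain ⟨hγ₀, hγ₁⟩ := hγ
  have hτ₀ : 0 < τ := hτ ▸ div_pos hT (by exact_mod_cast hK)
  have hΓ : 0 < Real.Gamma (2 - γ) := Real.Gamma_pos_of_pos (by linarith)
  have hc : 0 < Real.Gamma (2 - γ) * τ ^ γ := mul_pos hΓ (Real.rpow_pos_of_pos hτ₀ γ)
  have ha' : a = fun j : ℕ => ((j : ℝ) + 1) ^ (1 - γ) - (j : ℝ) ^ (1 - γ) := funext ha
  have key := caputoDiff_scheme_energy_le
    (ha' ▸ antitone_rpow_succ_sub_rpow (by linarith) (by linarith))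
    (ha' ▸ rpow_succ_sub_rpow_nonneg (by linarith)) hc U β φ K hineq
  have hsum : ∑ j ∈ Finset.range K, a j = (K : ℝ) ^ (1 - γ) := by
    simpa only [ha] using sum_range_rpow_succ_sub_rpow (by linarith) K
  rw [hsum] at key
  have hτ_scale : τ ^ (1 - γ) / Real.Gamma (2 - γ) * (Real.Gamma (2 - γ) * τ ^ γ) = τ := by
    calc _ = τ ^ (1 - γ) * τ ^ γ := by field_simp
      _ = τ := by rw [← Real.rpow_add hτ₀]; simp
  have hT_scale :
      τ ^ (1 - γ) / Real.Gamma (2 - γ) * (K : ℝ) ^ (1 - γ) = T ^ (1 - γ) / Real.Gamma (2 - γ) := by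
    rw [div_mul_eq_mul_div, ← Real.mul_rpow hτ₀.le (Nat.cast_nonneg K), hτ, div_mul_cancel₀]
    positivity
  have hd : 0 ≤ τ ^ (1 - γ) / Real.Gamma (2 - γ) := by positivity
  rw [sum_Icc_one_eq_sum_range_succ, sum_Icc_one_eq_sum_range_succ]
  linear_combination mul_le_mul_of_nonneg_left key hd
    + (∑ k ∈ Finset.range K, φ (k + 1) ^ 2 - ∑ k ∈ Finset.range K, β (k + 1) ^ 2) * hτ_scale
    + ‖U 0‖ ^ 2 * hT_scale

/-- Unconditional stability of the implicit time-discretization of the fractional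
evolution problem `∂_t^γ u + 𝔉 u = f` in a Hilbert space setting. -/
theorem fractional_scheme_unconditional_stability
    {H : Type*} [NormedAddCommGroup H] [InnerProductSpace ℝ H]
    (T : ℝ) (hT : 0 < T) (K : ℕ) (hK : 1 ≤ K)
    (γ : ℝ) (hγ : γ ∈ Set.Ioo (0 : ℝ) 1)
    (τ : ℝ) (hτ : τ = T / K)
    (a : ℕ → ℝ) (ha : ∀ j : ℕ, a j = ((j : ℝ) + 1) ^ (1 - γ) - (j : ℝ) ^ (1 - γ))
    (U : ℕ → H) (β φ : ℕ → ℝ)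
    (hβ : ∀ k, 1 ≤ k → k ≤ K → 0 ≤ β k)
    (hφ : ∀ k, 1 ≤ k → k ≤ K → 0 ≤ φ k)
    (hineq : ∀ k < K,
      (Real.Gamma (2 - γ) * τ ^ γ)⁻¹ *
          ⟪∑ j ∈ Finset.range (k + 1), a j • (U (k + 1 - j) - U (k - j)), U (k + 1)⟫
        + β (k + 1) ^ 2 ≤ φ (k + 1) * β (k + 1)) :
    τ ^ (1 - γ) / Real.Gamma (2 - γ) *
        ∑ j ∈ Finset.range K, a j * ‖U (K - j)‖ ^ 2
      + τ * ∑ k ∈ Finset.Icc 1 K, β k ^ 2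
    ≤ T ^ (1 - γ) / Real.Gamma (2 - γ) * ‖U 0‖ ^ 2
      + τ * ∑ k ∈ Finset.Icc 1 K, φ k ^ 2 :=
  fractional_scheme_unconditional_stability_general T hT K hK γ hγ τ hτ a ha U β φ hineq
end

section
/- Let X be a real Banach space, γ ∈ (0,1), T > 0, and σ > 3 - 2γ. There exists a constant C, depending only on γ, σ and T, with the following property. Let K ∈ ℕ, K ≥ 1, τ = T/K, t_k = kτ, and A ≥ 0. Let u : [0,T] → X be continuous and twice continuously differentiable on (0,T], and satisfy: (i) ‖u'(t) - t^{-1}(u(t) - u(0))‖_X ≤ A t^{γ-1} for all t ∈ (0,T]; (ii) ∫_0^T t^σ ‖u''(t)‖_X^2 dt ≤ A^2. For 1 ≤ j ≤ K define R_j = u'(t_j) - τ^{-1}(u(t_j) - u(t_{j-1})). Then τ Σ_{j=1}^{K} ‖R_j‖_X^2 ≤ C τ^{2-σ} A^2. -/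
/-!
On an interval `[a, b]` away from the origin, `(t - a) • u' t - u t` has derivative
`(t - a) • u'' t`, so `‖u' b - (u b - u a) / (b - a)‖ ≤ ∫_a^b ‖u''‖`; Cauchy–Schwarz and the
weight `t ^ σ ≥ a ^ σ` turn its square into `(b - a) a^(-σ) ∫_a^b t^σ ‖u''‖²`. For `j ≥ 2` we have
`a = t_{j-1} ≥ τ`, so these terms sum to at most `τ ^ (1 - σ) A²`. The first interval touches the
singularity at `0`, and there `R_1` is exactly the quantity bounded by hypothesis (i), giving
`τ ‖R_1‖² ≤ A² τ ^ (2γ - 1) ≤ T ^ (σ + 2γ - 3) τ ^ (2 - σ) A²` because `σ + 2γ - 3 > 0`.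
-/

open MeasureTheory Real Set

section

variable {E : Type*} [NormedAddCommGroup E] [NormedSpace ℝ E]

-- `E` need not be complete: the fundamental theorem of calculus is applied in its completion.
theorem norm_sub_le_integral_norm_deriv {f f' : ℝ → E} {a b : ℝ} (hab : a ≤ b)
    (hf : ∀ x ∈ Icc a b, HasDerivAt f (f' x) x) (hf' : ContinuousOn f' (Icc a b)) :
    ‖f b - f a‖ ≤ ∫ x in a..b, ‖f' x‖ := by
  let ι : E →L[ℝ] UniformSpace.Completion E := UniformSpace.Completion.toComplL
  have hftc : ∫ x in a..b, ι (f' x) = ι (f b) - ι (f a) :=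
    intervalIntegral.integral_eq_sub_of_hasDerivAt
      (fun x hx => ι.hasFDerivAt.comp_hasDerivAt x (hf x (uIcc_of_le hab ▸ hx)))
      ((ι.continuous.comp_continuousOn hf').intervalIntegrable_of_Icc hab)
  calc ‖f b - f a‖ = ‖∫ x in a..b, ι (f' x)‖ := by
        rw [hftc, ← map_sub]; exact (UniformSpace.Completion.norm_coe _).symm
    _ ≤ ∫ x in a..b, ‖ι (f' x)‖ := intervalIntegral.norm_integral_le_integral_norm hab
    _ = ∫ x in a..b, ‖f' x‖ := by congr 1 with x; exact UniformSpace.Completion.norm_coe _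

theorem sq_intervalIntegral_le_mul_integral_sq {f : ℝ → ℝ} {a b : ℝ} (hab : a ≤ b)
    (hf : ContinuousOn f (Icc a b)) :
    (∫ x in a..b, f x) ^ 2 ≤ (b - a) * ∫ x in a..b, f x ^ 2 := by
  rcases hab.eq_or_lt with rfl | hab
  · simp
  have hμ : volume (Ioc a b) ≠ 0 := by simp [hab]
  have hjensen := (even_two.convexOn_pow (𝕜 := ℝ)).map_set_average_le
    (continuous_pow 2).continuousOn isClosed_univ hμ (by simp) (by simp)
    ((hf.integrableOn_Icc).mono_set Ioc_subset_Icc_self)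
    (((hf.pow 2).integrableOn_Icc).mono_set Ioc_subset_Icc_self)
  simp only [setAverage_eq, Real.volume_real_Ioc_of_le hab.le, smul_eq_mul] at hjensen
  field_simp at hjensen
  rwa [intervalIntegral.integral_of_le hab.le, intervalIntegral.integral_of_le hab.le]

theorem norm_deriv_sub_slope_le_integral_norm {u u' u'' : ℝ → E} {a b : ℝ} (hab : a < b)
    (hu : ∀ t ∈ Icc a b, HasDerivAt u (u' t) t) (hu' : ∀ t ∈ Icc a b, HasDerivAt u' (u'' t) t)
    (hu'' : ContinuousOn u'' (Icc a b)) :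
    ‖u' b - (b - a)⁻¹ • (u b - u a)‖ ≤ ∫ t in a..b, ‖u'' t‖ := by
  have hba : 0 < b - a := sub_pos.2 hab
  have hφ : ∀ t ∈ Icc a b,
      HasDerivAt (fun s => (s - a) • u' s - u s) ((t - a) • u'' t) t := fun t ht =>
    ((((hasDerivAt_id t).sub_const a).smul (hu' t ht)).sub (hu t ht)).congr_deriv (by simp)
  have hincr := norm_sub_le_integral_norm_deriv hab.le hφ
    ((continuousOn_id.sub continuousOn_const).smul hu'')
  have hweight : ∫ t in a..b, ‖(t - a) • u'' t‖ ≤ (b - a) * ∫ t in a..b, ‖u'' t‖ := by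
    rw [← intervalIntegral.integral_const_mul]
    refine intervalIntegral.integral_mono_on hab.le ?_ ?_ fun t ht => ?_
    · exact (((continuousOn_id.sub continuousOn_const).smul hu'').norm).intervalIntegrable_of_Icc
        hab.le
    · exact (hu''.norm.intervalIntegrable_of_Icc hab.le).const_mul _
    · rw [norm_smul, Real.norm_of_nonneg (sub_nonneg.2 ht.1)]
      exact mul_le_mul_of_nonneg_right (by linarith [ht.2]) (norm_nonneg _)
  have hR : (b - a) • (u' b - (b - a)⁻¹ • (u b - u a))
      = ((b - a) • u' b - u b) - ((a - a) • u' a - u a) := by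
    rw [smul_sub, smul_inv_smul₀ hba.ne', sub_self, zero_smul]; abel
  refine le_of_mul_le_mul_left ?_ hba
  calc (b - a) * ‖u' b - (b - a)⁻¹ • (u b - u a)‖
      = ‖(b - a) • (u' b - (b - a)⁻¹ • (u b - u a))‖ := by
        rw [norm_smul, Real.norm_of_nonneg hba.le]
    _ ≤ ∫ t in a..b, ‖(t - a) • u'' t‖ := hR ▸ hincr
    _ ≤ (b - a) * ∫ t in a..b, ‖u'' t‖ := hweight

theorem intervalIntegral_le_rpow_neg_mul_integral_rpow_mul {g : ℝ → ℝ} {a b c σ : ℝ}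
    (hc : 0 < c) (hca : c ≤ a) (hab : a ≤ b) (hσ : 0 ≤ σ) (hg0 : ∀ s ∈ Icc a b, 0 ≤ g s)
    (hg : ContinuousOn g (Icc a b)) :
    ∫ s in a..b, g s ≤ c ^ (-σ) * ∫ s in a..b, s ^ σ * g s := by
  rw [← intervalIntegral.integral_const_mul]
  refine intervalIntegral.integral_mono_on hab (hg.intervalIntegrable_of_Icc hab)
    ((((continuousOn_id.rpow_const fun _ _ => Or.inr hσ).mul hg).intervalIntegrable_of_Icc
      hab).const_mul _) fun s hs => ?_
  have hweight : 1 ≤ c ^ (-σ) * s ^ σ := by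
    rw [rpow_neg hc.le, inv_mul_eq_div, one_le_div (rpow_pos_of_pos hc σ)]
    exact rpow_le_rpow hc.le (hca.trans hs.1) hσ
  calc g s = 1 * g s := (one_mul _).symm
    _ ≤ c ^ (-σ) * s ^ σ * g s := mul_le_mul_of_nonneg_right hweight (hg0 s hs)
    _ = c ^ (-σ) * (s ^ σ * g s) := mul_assoc _ _ _

theorem sq_norm_deriv_sub_slope_le {u u' u'' : ℝ → E} {a b c σ : ℝ}
    (hc : 0 < c) (hca : c ≤ a) (hab : a < b) (hσ : 0 ≤ σ)
    (hu : ∀ t ∈ Icc a b, HasDerivAt u (u' t) t) (hu' : ∀ t ∈ Icc a b, HasDerivAt u' (u'' t) t)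
    (hu'' : ContinuousOn u'' (Icc a b)) :
    ‖u' b - (b - a)⁻¹ • (u b - u a)‖ ^ 2
      ≤ (b - a) * c ^ (-σ) * ∫ t in a..b, t ^ σ * ‖u'' t‖ ^ 2 := by
  calc ‖u' b - (b - a)⁻¹ • (u b - u a)‖ ^ 2 ≤ (∫ t in a..b, ‖u'' t‖) ^ 2 :=
        pow_le_pow_left₀ (norm_nonneg _) (norm_deriv_sub_slope_le_integral_norm hab hu hu' hu'') 2
    _ ≤ (b - a) * ∫ t in a..b, ‖u'' t‖ ^ 2 :=
        sq_intervalIntegral_le_mul_integral_sq hab.le hu''.norm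
    _ ≤ (b - a) * (c ^ (-σ) * ∫ t in a..b, t ^ σ * ‖u'' t‖ ^ 2) :=
        mul_le_mul_of_nonneg_left (intervalIntegral_le_rpow_neg_mul_integral_rpow_mul hc hca
          hab.le hσ (fun _ _ => sq_nonneg _) (hu''.norm.pow 2)) (sub_pos.2 hab).le
    _ = (b - a) * c ^ (-σ) * ∫ t in a..b, t ^ σ * ‖u'' t‖ ^ 2 := (mul_assoc _ _ _).symm

theorem sum_Ioc_sq_norm_deriv_sub_backward_diff_le {u u' u'' : ℝ → E} {τ σ : ℝ} {K : ℕ}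
    (hτ : 0 < τ) (hσ : 0 ≤ σ) (hK : 1 ≤ K)
    (hu : ∀ t ∈ Icc τ (K * τ), HasDerivAt u (u' t) t)
    (hu' : ∀ t ∈ Icc τ (K * τ), HasDerivAt u' (u'' t) t)
    (hu'' : ContinuousOn u'' (Icc τ (K * τ))) :
    ∑ j ∈ Finset.Ioc 1 K, ‖u' (j * τ) - τ⁻¹ • (u (j * τ) - u ((j - 1) * τ))‖ ^ 2
      ≤ τ ^ (1 - σ) * ∫ t in τ..K * τ, t ^ σ * ‖u'' t‖ ^ 2 := by
  have hterm : ∀ j ∈ Finset.Ioc 1 K, ‖u' (j * τ) - τ⁻¹ • (u (j * τ) - u ((j - 1) * τ))‖ ^ 2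
      ≤ τ ^ (1 - σ) * ∫ t in ((j : ℝ) - 1) * τ..j * τ, t ^ σ * ‖u'' t‖ ^ 2 := by
    intro j hj
    have hj : (2 : ℝ) ≤ j ∧ (j : ℝ) ≤ K := by
      obtain ⟨h1, h2⟩ := Finset.mem_Ioc.1 hj
      exact ⟨by exact_mod_cast h1, by exact_mod_cast h2⟩
    have hsub : Icc (((j : ℝ) - 1) * τ) (j * τ) ⊆ Icc τ (K * τ) :=
      Icc_subset_Icc (by nlinarith) (by nlinarith)
    have h := sq_norm_deriv_sub_slope_le hτ (by nlinarith) (by nlinarith) hσ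
      (fun t ht => hu t (hsub ht)) (fun t ht => hu' t (hsub ht)) (hu''.mono hsub)
    rw [show (j : ℝ) * τ - ((j : ℝ) - 1) * τ = τ by ring] at h
    rwa [rpow_sub hτ, rpow_one, div_eq_mul_inv, ← rpow_neg hτ.le]
  have hF : ContinuousOn (fun t => t ^ σ * ‖u'' t‖ ^ 2) (Icc τ (K * τ)) :=
    (continuousOn_id.rpow_const fun _ _ => Or.inr hσ).mul (hu''.norm.pow 2)
  have hadjacent := intervalIntegral.sum_integral_adjacent_intervals_Ico
    (a := fun k : ℕ => (k : ℝ) * τ) (f := fun t => t ^ σ * ‖u'' t‖ ^ 2) (μ := volume) hK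
    fun k hk => by
      have hk1 : (1 : ℝ) ≤ k := by exact_mod_cast hk.1
      have hkK : ((k + 1 : ℕ) : ℝ) ≤ K := by exact_mod_cast hk.2
      exact (hF.mono (Icc_subset_Icc (by nlinarith) (by nlinarith))).intervalIntegrable_of_Icc
        (by push_cast; nlinarith)
  push_cast at hadjacent
  calc _ ≤ ∑ j ∈ Finset.Ioc 1 K,
        τ ^ (1 - σ) * ∫ t in ((j : ℝ) - 1) * τ..j * τ, t ^ σ * ‖u'' t‖ ^ 2 :=
        Finset.sum_le_sum hterm
    _ = τ ^ (1 - σ) * ∫ t in τ..K * τ, t ^ σ * ‖u'' t‖ ^ 2 := by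
        rw [← Finset.mul_sum, ← Finset.Ico_add_one_add_one_eq_Ioc, ← Finset.sum_Ico_add']
        congr 1
        simpa using hadjacent

end

theorem mul_sq_le_rpow_mul_rpow_mul_sq {τ T A x γ σ : ℝ} (hτ : 0 < τ) (hτT : τ ≤ T)
    (hexp : 0 ≤ σ + 2 * γ - 3) (hx : 0 ≤ x) (hxA : x ≤ A * τ ^ (γ - 1)) :
    τ * x ^ 2 ≤ T ^ (σ + 2 * γ - 3) * τ ^ (2 - σ) * A ^ 2 := by
  calc τ * x ^ 2 ≤ τ * (A * τ ^ (γ - 1)) ^ 2 :=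
        mul_le_mul_of_nonneg_left (pow_le_pow_left₀ hx hxA 2) hτ.le
    _ = τ ^ (σ + 2 * γ - 3) * τ ^ (2 - σ) * A ^ 2 := by
        rw [← rpow_add hτ, mul_pow, ← rpow_mul_natCast hτ.le,
          show σ + 2 * γ - 3 + (2 - σ) = 1 + (γ - 1) * (2 : ℕ) by push_cast; ring,
          rpow_add hτ, rpow_one]
        ring
    _ ≤ T ^ (σ + 2 * γ - 3) * τ ^ (2 - σ) * A ^ 2 := by gcongr

/-- Estimate for the backward difference quotient residual `R_j = u'(t_j) - δ¹u(t_j)`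
under realistic time regularity of solutions of fractional-in-time parabolic problems. -/
theorem backward_difference_residual_estimate
    {X : Type*} [NormedAddCommGroup X] [NormedSpace ℝ X]
    (γ T σ : ℝ) (hγ : γ ∈ Set.Ioo (0 : ℝ) 1) (hT : 0 < T)
    (hσ : 3 - 2 * γ < σ) :
    ∃ C > 0, ∀ (K : ℕ), 1 ≤ K → ∀ (τ : ℝ), τ = T / K →
      ∀ (A : ℝ), 0 ≤ A → ∀ (u u' u'' : ℝ → X),
      ContinuousOn u (Set.Icc 0 T) →
      (∀ t ∈ Set.Ioc (0 : ℝ) T, HasDerivAt u (u' t) t) →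
      (∀ t ∈ Set.Ioc (0 : ℝ) T, HasDerivAt u' (u'' t) t) →
      ContinuousOn u' (Set.Ioc 0 T) →
      ContinuousOn u'' (Set.Ioc 0 T) →
      (∀ t ∈ Set.Ioc (0 : ℝ) T, ‖u' t - t⁻¹ • (u t - u 0)‖ ≤ A * t ^ (γ - 1)) →
      MeasureTheory.IntegrableOn (fun t => t ^ σ * ‖u'' t‖ ^ 2) (Set.Ioc 0 T) →
      (∫ t in Set.Ioc (0 : ℝ) T, t ^ σ * ‖u'' t‖ ^ 2) ≤ A ^ 2 →
      τ * ∑ j ∈ Finset.Icc 1 K,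
          ‖u' ((j : ℝ) * τ) - τ⁻¹ • (u ((j : ℝ) * τ) - u (((j : ℝ) - 1) * τ))‖ ^ 2
        ≤ C * τ ^ (2 - σ) * A ^ 2 := by
  have hσ0 : 0 ≤ σ := by linarith [hγ.2]
  refine ⟨T ^ (σ + 2 * γ - 3) + 1, by positivity, ?_⟩
  intro K hK τ hτ A _ u u' u'' _ hu hu' _ hu'' hsing hF hFA
  have hτ0 : 0 < τ := hτ ▸ div_pos hT (by exact_mod_cast hK)
  have hKτ : (K : ℝ) * τ = T := by rw [hτ]; field_simp
  have hτT : τ ≤ T := hKτ ▸ le_mul_of_one_le_left hτ0.le (by exact_mod_cast hK)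
  have hsub : Icc τ (K * τ) ⊆ Ioc 0 T := hKτ ▸ fun t ht => ⟨hτ0.trans_le ht.1, ht.2⟩
  have htail : ∫ t in τ..K * τ, t ^ σ * ‖u'' t‖ ^ 2 ≤ A ^ 2 := by
    rw [hKτ, intervalIntegral.integral_of_le hτT]
    refine le_trans (setIntegral_mono_set hF ?_ (Ioc_subset_Ioc_left hτ0.le).eventuallyLE) hFA
    exact (ae_restrict_iff' measurableSet_Ioc).2 (.of_forall fun t ht =>
      mul_nonneg (rpow_nonneg ht.1.le σ) (sq_nonneg _))
  have hfirst := mul_sq_le_rpow_mul_rpow_mul_sq (σ := σ) hτ0 hτT (by linarith) (norm_nonneg _)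
    (hsing τ ⟨hτ0, hτT⟩)
  have hrest := sum_Ioc_sq_norm_deriv_sub_backward_diff_le hτ0 hσ0 hK
    (fun t ht => hu t (hsub ht)) (fun t ht => hu' t (hsub ht)) (hu''.mono hsub)
  rw [Finset.Icc_eq_cons_Ioc hK, Finset.sum_cons]
  simp only [Nat.cast_one, one_mul, sub_self, zero_mul]
  calc _ = _ + _ := mul_add _ _ _
    _ ≤ T ^ (σ + 2 * γ - 3) * τ ^ (2 - σ) * A ^ 2 + τ * (τ ^ (1 - σ) * A ^ 2) :=
        add_le_add hfirst (mul_le_mul_of_nonneg_left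
          (hrest.trans (mul_le_mul_of_nonneg_left htail (by positivity))) hτ0.le)
    _ = (T ^ (σ + 2 * γ - 3) + 1) * τ ^ (2 - σ) * A ^ 2 := by
        rw [show (2 : ℝ) - σ = 1 + (1 - σ) by ring, rpow_add hτ0, rpow_one]; ring
end

section
/- Let γ ∈ (0,1), τ > 0, k ∈ ℕ, and set t_j = jτ for j = 0, …, k+1. Define ψ(t) = (t_{k+1} - t)^{-γ} for t < t_{k+1}, let ψ̄_j = τ^{-1} ∫_{t_j}^{t_{j+1}} ψ(t) dt for 0 ≤ j ≤ k-1, and set ψ̄_k = 0. Then Σ_{j=0}^{k} ∫_{t_j}^{t_{j+1}} |ψ(t) - ψ̄_j| dt ≤ ((2-γ)/(1-γ)) τ^{1-γ}. -/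
/-!
On each interval `I_j` with `j < k` the kernel `ψ` is increasing, so both `ψ` and its average
`ψ̄_j` lie between `ψ(t_j)` and `ψ(t_{j+1})`; the `j`-th integral is then at most
`τ (ψ(t_{j+1}) - ψ(t_j))`, and these bounds telescope to `τ ψ(t_k) = τ^{1-γ}`. On the last
interval `ψ̄_k = 0` and the integral of the singular kernel is exactly `τ^{1-γ} / (1-γ)`.
-/

open MeasureTheory Real Set

section MonotoneOscillation

variable {f : ℝ → ℝ} {a b : ℝ}

theorem MonotoneOn.intervalAverage_mem_Icc (hf : MonotoneOn f (Icc a b)) (hab : a < b) :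
    (b - a)⁻¹ * ∫ t in a..b, f t ∈ Icc (f a) (f b) := by
  have hint : IntervalIntegrable f volume a b := (uIcc_of_le hab.le ▸ hf).intervalIntegrable
  have hlen : 0 < b - a := sub_pos.mpr hab
  have hlower := intervalIntegral.integral_mono_on hab.le intervalIntegrable_const hint
    fun t ht => hf ⟨le_rfl, hab.le⟩ ht ht.1
  have hupper := intervalIntegral.integral_mono_on hab.le hint intervalIntegrable_const
    fun t ht => hf ht ⟨hab.le, le_rfl⟩ ht.2
  rw [intervalIntegral.integral_const, smul_eq_mul] at hlower hupper
  constructor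
  · rw [le_inv_mul_iff₀ hlen]; linarith
  · rw [inv_mul_le_iff₀ hlen]; linarith

theorem MonotoneOn.integral_abs_sub_le (hf : MonotoneOn f (Icc a b)) (hab : a ≤ b) {c : ℝ}
    (hc : c ∈ Icc (f a) (f b)) :
    ∫ t in a..b, |f t - c| ≤ (b - a) * (f b - f a) := by
  have hint : IntervalIntegrable f volume a b := (uIcc_of_le hab ▸ hf).intervalIntegrable
  calc ∫ t in a..b, |f t - c|
      ≤ ∫ _ in a..b, (f b - f a) :=
        intervalIntegral.integral_mono_on hab (hint.sub intervalIntegrable_const).abs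
          intervalIntegrable_const fun t ht => by
            have := hf ⟨le_rfl, hab⟩ ht ht.1
            have := hf ht ⟨hab, le_rfl⟩ ht.2
            rw [abs_sub_le_iff]; constructor <;> linarith [hc.1, hc.2]
    _ = (b - a) * (f b - f a) := by rw [intervalIntegral.integral_const, smul_eq_mul]

theorem MonotoneOn.sum_integral_abs_sub_average_le {τ : ℝ} (hτ : 0 < τ) (n : ℕ)
    (hf : MonotoneOn f (Icc 0 (n * τ))) :
    ∑ j ∈ Finset.range n, ∫ t in (j * τ)..((j + 1) * τ),
        |f t - τ⁻¹ * ∫ s in (j * τ)..((j + 1) * τ), f s| ≤ τ * (f (n * τ) - f 0) := by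
  have hterm (j : ℕ) (hj : j < n) :
      ∫ t in (j * τ)..((j + 1) * τ), |f t - τ⁻¹ * ∫ s in (j * τ)..((j + 1) * τ), f s|
        ≤ τ * (f (((j + 1 : ℕ) : ℝ) * τ) - f (j * τ)) := by
    have hjn : (j : ℝ) + 1 ≤ n := by exact_mod_cast hj
    have hfj : MonotoneOn f (Icc (j * τ) ((j + 1) * τ)) :=
      hf.mono (Icc_subset_Icc (by positivity) (by nlinarith))
    have hlen : ((j : ℝ) + 1) * τ - j * τ = τ := by ring
    have hmem := hfj.intervalAverage_mem_Icc (by nlinarith)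
    rw [hlen] at hmem
    simpa only [hlen, Nat.cast_succ] using hfj.integral_abs_sub_le (by nlinarith) hmem
  calc _ ≤ ∑ j ∈ Finset.range n, τ * (f (((j + 1 : ℕ) : ℝ) * τ) - f (j * τ)) :=
        Finset.sum_le_sum fun j hj => hterm j (Finset.mem_range.mp hj)
    _ = τ * (f (n * τ) - f 0) := by
        rw [← Finset.mul_sum, Finset.sum_range_sub fun j : ℕ => f (j * τ), Nat.cast_zero,
          zero_mul]

end MonotoneOscillation

section CaputoKernel

variable {γ : ℝ}

theorem monotoneOn_sub_rpow_neg (hγ : 0 ≤ γ) (T : ℝ) :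
    MonotoneOn (fun t => (T - t) ^ (-γ)) (Iio T) := fun _ _ _ hy hxy =>
  rpow_le_rpow_of_nonpos (sub_pos.mpr hy) (by linarith) (neg_nonpos.mpr hγ)

theorem integral_abs_sub_rpow_neg (hγ : γ < 1) {a T : ℝ} (haT : a ≤ T) :
    ∫ t in a..T, |(T - t) ^ (-γ)| = (T - a) ^ (1 - γ) / (1 - γ) := by
  have hpos : ∀ t ∈ uIcc a T, |(T - t) ^ (-γ)| = (T - t) ^ (-γ) := fun t ht =>
    abs_of_nonneg <| rpow_nonneg (sub_nonneg.mpr (uIcc_of_le haT ▸ ht).2) _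
  rw [intervalIntegral.integral_congr hpos,
    intervalIntegral.integral_comp_sub_left (fun x => x ^ (-γ)), sub_self,
    integral_rpow (Or.inl (by linarith)), zero_rpow (by linarith), neg_add_eq_sub, sub_zero]

end CaputoKernel

/-- Kernel estimate: the total `L¹`-distance between the Caputo kernel
`ψ(t) = (t_{k+1} - t)^{-γ}` and its interval averages is bounded by
`((2-γ)/(1-γ)) τ^{1-γ}`. -/
theorem caputo_kernel_L1_estimate
    (γ τ : ℝ) (hγ : γ ∈ Set.Ioo (0 : ℝ) 1) (hτ : 0 < τ) (k : ℕ)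
    (ψbar : ℕ → ℝ)
    (hψbar : ∀ j < k, ψbar j =
      τ⁻¹ * ∫ t in ((j : ℝ) * τ)..(((j : ℝ) + 1) * τ),
        (((k : ℝ) + 1) * τ - t) ^ (-γ))
    (hψbark : ψbar k = 0) :
    ∑ j ∈ Finset.range (k + 1),
        ∫ t in ((j : ℝ) * τ)..(((j : ℝ) + 1) * τ),
          |(((k : ℝ) + 1) * τ - t) ^ (-γ) - ψbar j|
      ≤ (2 - γ) / (1 - γ) * τ ^ (1 - γ) := by
  obtain ⟨hγ0, hγ1⟩ := hγ
  set ψ : ℝ → ℝ := fun t => (((k : ℝ) + 1) * τ - t) ^ (-γ) with hψ_def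
  have hψ_mono : MonotoneOn ψ (Icc 0 (k * τ)) :=
    (monotoneOn_sub_rpow_neg hγ0.le _).mono fun t ht => by
      simp only [mem_Iio]; nlinarith [ht.2]
  have hψ_last : ψ (k * τ) = τ ^ (-γ) := by simp only [hψ_def]; ring_nf
  have hψ_zero : 0 ≤ ψ 0 := rpow_nonneg (by simp only [sub_zero]; positivity) _
  rw [Finset.sum_range_succ, hψbark, Finset.sum_congr rfl fun j hj => by
    rw [hψbar j (Finset.mem_range.mp hj)]]
  simp only [sub_zero]
  rw [integral_abs_sub_rpow_neg hγ1 (by nlinarith),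
    show ((k : ℝ) + 1) * τ - k * τ = τ by ring]
  calc _ ≤ τ * (ψ (k * τ) - ψ 0) + τ ^ (1 - γ) / (1 - γ) := by
        gcongr; exact hψ_mono.sum_integral_abs_sub_average_le hτ k
    _ ≤ τ * τ ^ (-γ) + τ ^ (1 - γ) / (1 - γ) := by
        rw [hψ_last]; gcongr; exact sub_le_self _ hψ_zero
    _ = (2 - γ) / (1 - γ) * τ ^ (1 - γ) := by
        have h1γ : 1 - γ ≠ 0 := by linarith
        rw [← rpow_one_add' hτ.le (by simpa [sub_eq_add_neg] using h1γ), ← sub_eq_add_neg]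
        field_simp
        ring
end

section
/- Let γ ∈ (0,1), τ > 0, k ∈ ℕ, and set t_j = jτ for j = 0, …, k+1. Define ψ(t) = (t_{k+1} - t)^{-γ} for t < t_{k+1} and, for 0 ≤ j ≤ k-1, ψ̄_j = τ^{-1} ∫_{t_j}^{t_{j+1}} ψ(t) dt. Then for every j with 0 ≤ j < k: ∫_{t_j}^{t_{j+1}} |ψ(t) - ψ̄_j| dt ≤ τ^{1-γ} ( (k-j)^{-γ} - (k-j+1)^{-γ} ). -/
open MeasureTheory Real Set

/-!
On `[jτ, (j+1)τ]` the kernel `t ↦ ((k+1)τ - t)^{-γ}` is decreasing, so both the kernel and its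
average lie between its endpoint values `((k-j+1)τ)^{-γ}` and `((k-j)τ)^{-γ}`. Hence the
integrand `|ψ - ψ̄_j|` is at most their difference, and integrating over an interval of
length `τ` gives the bound after pulling `τ^{-γ}` out of both powers.
-/

namespace intervalIntegral

variable {f : ℝ → ℝ} {a b m M : ℝ}

theorem inv_mul_integral_mem_Icc (hab : a < b) (hf : IntervalIntegrable f volume a b)
    (hbound : ∀ t ∈ Icc a b, f t ∈ Icc m M) :
    (b - a)⁻¹ * ∫ t in a..b, f t ∈ Icc m M := by
  have hlen : 0 < b - a := sub_pos.mpr hab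
  have hlower : (b - a) * m ≤ ∫ t in a..b, f t := by
    simpa using integral_mono_on hab.le intervalIntegrable_const hf fun t ht => (hbound t ht).1
  have hupper : (∫ t in a..b, f t) ≤ (b - a) * M := by
    simpa using integral_mono_on hab.le hf intervalIntegrable_const fun t ht => (hbound t ht).2
  rw [inv_mul_eq_div]
  exact ⟨(le_div_iff₀' hlen).mpr hlower, (div_le_iff₀' hlen).mpr hupper⟩

theorem integral_abs_sub_le_mul_of_mem_Icc {c : ℝ} (hab : a ≤ b)
    (hf : IntervalIntegrable f volume a b) (hbound : ∀ t ∈ Icc a b, f t ∈ Icc m M)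
    (hc : c ∈ Icc m M) :
    ∫ t in a..b, |f t - c| ≤ (b - a) * (M - m) := by
  have hpointwise : ∀ t ∈ Icc a b, |f t - c| ≤ M - m := fun t ht => by
    obtain ⟨hm, hM⟩ := hbound t ht
    rw [abs_le]
    constructor <;> linarith [hc.1, hc.2]
  simpa [mul_sub] using integral_mono_on hab (hf.sub intervalIntegrable_const).abs
    intervalIntegrable_const hpointwise

end intervalIntegral

theorem Real.rpow_neg_sub_mem_Icc {γ a b c t : ℝ} (hγ : 0 ≤ γ) (hbc : b < c)
    (ht : t ∈ Icc a b) :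
    (c - t) ^ (-γ) ∈ Icc ((c - a) ^ (-γ)) ((c - b) ^ (-γ)) := by
  have hneg : -γ ≤ 0 := neg_nonpos.mpr hγ
  exact ⟨rpow_le_rpow_of_nonpos (by linarith [ht.2]) (by linarith [ht.1]) hneg,
    rpow_le_rpow_of_nonpos (by linarith) (by linarith [ht.2]) hneg⟩

theorem Real.mul_sub_mul_rpow_neg {γ τ x y : ℝ} (hτ : 0 < τ) (hx : 0 ≤ x) (hy : 0 ≤ y) :
    τ * ((x * τ) ^ (-γ) - (y * τ) ^ (-γ)) = τ ^ (1 - γ) * (x ^ (-γ) - y ^ (-γ)) := by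
  rw [mul_rpow hx hτ.le, mul_rpow hy hτ.le, sub_eq_add_neg 1 γ, rpow_add hτ, rpow_one]
  ring

/-- Per-interval kernel estimate: for `j < k`, the `L¹`-distance on `I_j` between the
Caputo kernel `ψ(t) = (t_{k+1} - t)^{-γ}` and its average over `I_j` is bounded by
`τ^{1-γ} ((k-j)^{-γ} - (k-j+1)^{-γ})`. -/
theorem caputo_kernel_interval_estimate
    (γ τ : ℝ) (hγ : γ ∈ Set.Ioo (0 : ℝ) 1) (hτ : 0 < τ) (k : ℕ)
    (ψbar : ℕ → ℝ)
    (hψbar : ∀ j < k, ψbar j =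
      τ⁻¹ * ∫ t in ((j : ℝ) * τ)..(((j : ℝ) + 1) * τ),
        (((k : ℝ) + 1) * τ - t) ^ (-γ)) :
    ∀ j < k,
      (∫ t in ((j : ℝ) * τ)..(((j : ℝ) + 1) * τ),
          |(((k : ℝ) + 1) * τ - t) ^ (-γ) - ψbar j|)
        ≤ τ ^ (1 - γ) *
            (((k : ℝ) - (j : ℝ)) ^ (-γ) - ((k : ℝ) - (j : ℝ) + 1) ^ (-γ)) := by
  intro j hj
  have hjk : (j : ℝ) + 1 ≤ k := by exact_mod_cast hj
  have hlen : ((j : ℝ) + 1) * τ - j * τ = τ := by ring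
  have hend : ((j : ℝ) + 1) * τ < (k + 1) * τ := by nlinarith
  have hbound := fun t (ht : t ∈ Icc ((j : ℝ) * τ) ((j + 1) * τ)) =>
    rpow_neg_sub_mem_Icc hγ.1.le hend ht
  have hint : IntervalIntegrable (fun t => ((k + 1) * τ - t) ^ (-γ)) volume
      ((j : ℝ) * τ) ((j + 1) * τ) :=
    (ContinuousOn.rpow_const (by fun_prop) fun t ht => .inl (by linarith [ht.2]))
      |>.intervalIntegrable_of_Icc (by linarith)
  have havg : ψbar j ∈
      Icc (((k + 1) * τ - j * τ) ^ (-γ)) (((k + 1) * τ - (j + 1) * τ) ^ (-γ)) := by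
    have := intervalIntegral.inv_mul_integral_mem_Icc (by linarith) hint hbound
    rwa [hlen, ← hψbar j hj] at this
  calc _ ≤ (((j : ℝ) + 1) * τ - j * τ) *
        (((k + 1) * τ - (j + 1) * τ) ^ (-γ) - ((k + 1) * τ - j * τ) ^ (-γ)) :=
        intervalIntegral.integral_abs_sub_le_mul_of_mem_Icc (by linarith) hint hbound havg
    _ = τ * ((((k : ℝ) - j) * τ) ^ (-γ) - (((k : ℝ) - j + 1) * τ) ^ (-γ)) := by ring_nf
    _ = _ := mul_sub_mul_rpow_neg hτ (by linarith) (by linarith)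
end

section
/- Let γ ∈ (0,1) and λ > 0. For every t > 0, the function s ↦ E_{γ,1}(-λ s^γ) is differentiable at t with derivative equal to -λ t^{γ-1} E_{γ,γ}(-λ t^γ), where E_{γ,μ} denotes the Mittag-Leffler function. -/
/-!
Differentiating the entire series term by term gives
`E_{γ,1}'(z) = Σ (k+1) z^k / Γ(γ(k+1)+1) = E_{γ,γ}(z) / γ`, since `Γ(x+1) = x Γ(x)`;
the chain rule with `d/ds (-λ s^γ) = -λ γ s^{γ-1}` then gives the claim.
The series are entire because `Γ(x) ≥ A^{x-1} e^{-(A+1)}` for every `A > 0` and `x ≥ 1`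
(integrate only over `[A, A+1]`), which beats every geometric sequence.
-/

open MeasureTheory Real Set

/-- The Mittag-Leffler function `E_{γ,μ}(z) = Σ_{k=0}^∞ z^k / Γ(γk + μ)`. -/
noncomputable def mittagLeffler (γ μ : ℝ) (z : ℝ) : ℝ :=
  ∑' k : ℕ, z ^ k / Real.Gamma (γ * k + μ)

theorem natCast_mul_pow_sub_one_le_add_one_pow {R : ℝ} (hR : 0 ≤ R) (n : ℕ) :
    n * R ^ (n - 1) ≤ (R + 1) ^ n := by
  induction n with
  | zero => simp
  | succ m ih =>
    rcases m with _ | m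
    · simp [hR]
    · have hpow : R ^ (m + 1) ≤ (R + 1) ^ (m + 1) := pow_le_pow_left₀ hR (by linarith) _
      simp only [Nat.add_sub_cancel, Nat.cast_add, Nat.cast_one] at ih ⊢
      calc ((m : ℝ) + 1 + 1) * R ^ (m + 1) = R * ((m + 1) * R ^ m) + R ^ (m + 1) := by ring
        _ ≤ R * (R + 1) ^ (m + 1) + (R + 1) ^ (m + 1) := by gcongr
        _ = (R + 1) ^ (m + 1 + 1) := by ring

theorem hasDerivAt_tsum_mul_pow {𝕜 : Type*} [RCLike 𝕜] {a : ℕ → 𝕜}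
    (ha : ∀ r : ℝ, Summable fun n => ‖a n‖ * r ^ n) (z : 𝕜) :
    HasDerivAt (fun x => ∑' n, a n * x ^ n) (∑' n, (n + 1) * a (n + 1) * z ^ n) z := by
  set R := ‖z‖ + 1
  have hz : z ∈ Metric.ball (0 : 𝕜) R := by simp [R]
  have hbound : ∀ n, ∀ x ∈ Metric.ball (0 : 𝕜) R,
      ‖a n * (n * x ^ (n - 1))‖ ≤ ‖a n‖ * (R + 1) ^ n := by
    intro n x hx
    rw [mem_ball_zero_iff] at hx
    rw [norm_mul, norm_mul, norm_pow, RCLike.norm_natCast]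
    gcongr
    calc (n : ℝ) * ‖x‖ ^ (n - 1) ≤ n * R ^ (n - 1) := by gcongr
      _ ≤ (R + 1) ^ n := natCast_mul_pow_sub_one_le_add_one_pow (by positivity) n
  have hsum_deriv : Summable fun n => a n * (n * z ^ (n - 1)) :=
    .of_norm_bounded (ha (R + 1)) fun n => hbound n z hz
  have hsum : Summable fun n => a n * z ^ n :=
    .of_norm_bounded (ha ‖z‖) fun n => by rw [norm_mul, norm_pow]
  have hderiv := hasDerivAt_tsum_of_isPreconnected (ha (R + 1)) Metric.isOpen_ball
    (convex_ball (0 : 𝕜) R).isPreconnected (fun n x _ => (hasDerivAt_pow n x).const_mul (a n))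
    hbound hz hsum hz
  rw [hsum_deriv.tsum_eq_zero_add] at hderiv
  refine hderiv.congr_deriv ?_
  simp only [Nat.cast_zero, zero_mul, mul_zero, zero_add, Nat.add_sub_cancel, Nat.cast_add,
    Nat.cast_one]
  exact tsum_congr fun n => by ring

theorem rpow_mul_exp_neg_le_Gamma {A x : ℝ} (hA : 0 < A) (hx : 1 ≤ x) :
    A ^ (x - 1) * exp (-(A + 1)) ≤ Gamma x := by
  have hint : IntegrableOn (fun u => exp (-u) * u ^ (x - 1)) (Ioi 0) :=
    GammaIntegral_convergent (by linarith)
  have hsub : Ioc A (A + 1) ⊆ Ioi 0 := fun u hu => hA.trans hu.1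
  calc A ^ (x - 1) * exp (-(A + 1))
      = A ^ (x - 1) * exp (-(A + 1)) * volume.real (Ioc A (A + 1)) := by simp
    _ ≤ ∫ u in Ioc A (A + 1), exp (-u) * u ^ (x - 1) := by
      refine setIntegral_ge_of_const_le_real measurableSet_Ioc (by simp) (fun u hu => ?_)
        (hint.mono_set hsub)
      rw [mul_comm]
      gcongr <;> linarith [hu.1, hu.2]
    _ ≤ ∫ u in Ioi 0, exp (-u) * u ^ (x - 1) :=
      setIntegral_mono_set hint
        (ae_restrict_of_forall_mem measurableSet_Ioi fun u (hu : 0 < u) => by positivity)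
        (.of_forall hsub)
    _ = Gamma x := (Gamma_eq_integral (by linarith)).symm

theorem summable_norm_inv_Gamma_mul_pow {γ : ℝ} (hγ : 0 < γ) (μ r : ℝ) :
    Summable fun k : ℕ => ‖(Gamma (γ * k + μ))⁻¹‖ * r ^ k := by
  -- `A` is chosen so that `A ^ (γ * k) = (|r| + 1) ^ k` in the lower bound for `Γ`.
  set A := (|r| + 1) ^ γ⁻¹
  have hA : 0 < A := by positivity
  have hAγ : A ^ γ = |r| + 1 := by
    rw [← rpow_mul (by positivity), inv_mul_cancel₀ hγ.ne', rpow_one]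
  set ρ := |r| / (|r| + 1)
  have hρ : ρ < 1 := (div_lt_one (by positivity)).2 (by linarith)
  refine .of_norm_bounded_eventually_nat
    ((summable_geometric_of_lt_one (by positivity) hρ).mul_left (exp (A + 1) / A ^ (μ - 1))) ?_
  have h_arg : ∀ᶠ k : ℕ in Filter.atTop, 1 ≤ γ * k + μ :=
    (Filter.tendsto_atTop_add_const_right _ μ
      (tendsto_natCast_atTop_atTop.const_mul_atTop hγ)).eventually_ge_atTop 1
  filter_upwards [h_arg] with k hk
  have hΓ := rpow_mul_exp_neg_le_Gamma hA hk
  have hsplit : A ^ (γ * k + μ - 1) = (|r| + 1) ^ k * A ^ (μ - 1) := by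
    rw [show γ * k + μ - 1 = γ * k + (μ - 1) by ring, rpow_add hA, rpow_mul hA.le, hAγ,
      rpow_natCast]
  rw [norm_mul, norm_norm, norm_inv, Real.norm_of_nonneg (hΓ.trans' (by positivity)), norm_pow,
    Real.norm_eq_abs]
  calc (Gamma (γ * k + μ))⁻¹ * |r| ^ k ≤ (A ^ (γ * k + μ - 1) * exp (-(A + 1)))⁻¹ * |r| ^ k := by
        gcongr
    _ = exp (A + 1) / A ^ (μ - 1) * ρ ^ k := by
        rw [hsplit, div_pow, exp_neg]
        field_simp

theorem succ_mul_inv_Gamma_mul_succ_add_one {γ : ℝ} (hγ : 0 < γ) (n : ℕ) :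
    ((n : ℝ) + 1) * (Gamma (γ * (n + 1) + 1))⁻¹ = (Gamma (γ * n + γ))⁻¹ / γ := by
  have hΓ : 0 < Gamma (γ * n + γ) := Gamma_pos_of_pos (by positivity)
  rw [mul_add_one γ, Gamma_add_one (by positivity)]
  field_simp

theorem hasDerivAt_mittagLeffler_one {γ : ℝ} (hγ : 0 < γ) (z : ℝ) :
    HasDerivAt (mittagLeffler γ 1) (mittagLeffler γ γ z / γ) z := by
  have hseries : mittagLeffler γ 1 = fun x => ∑' k : ℕ, (Gamma (γ * k + 1))⁻¹ * x ^ k := by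
    funext x
    simp only [mittagLeffler, div_eq_inv_mul]
  rw [hseries]
  refine (hasDerivAt_tsum_mul_pow (summable_norm_inv_Gamma_mul_pow hγ 1) z).congr_deriv ?_
  rw [mittagLeffler, ← tsum_div_const]
  refine tsum_congr fun n => ?_
  rw [Nat.cast_add_one, succ_mul_inv_Gamma_mul_succ_add_one hγ]
  ring

theorem mittagLeffler_hasDerivAt_general
    (γ lam : ℝ) (hγ : γ ∈ Set.Ioo (0 : ℝ) 1)
    (t : ℝ) (ht : 0 < t) :
    HasDerivAt (fun s : ℝ => mittagLeffler γ 1 (-lam * s ^ γ))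
      (-lam * t ^ (γ - 1) * mittagLeffler γ γ (-lam * t ^ γ)) t := by
  have hinner : HasDerivAt (fun s : ℝ => -lam * s ^ γ) (-lam * (γ * t ^ (γ - 1))) t :=
    (hasDerivAt_rpow_const (Or.inl ht.ne')).const_mul _
  refine ((hasDerivAt_mittagLeffler_one hγ.1 _).comp t hinner).congr_deriv ?_
  field_simp [hγ.1.ne']

/-- The derivative of `t ↦ E_{γ,1}(-λ t^γ)` at `t > 0` is
`-λ t^{γ-1} E_{γ,γ}(-λ t^γ)`. -/
theorem mittagLeffler_hasDerivAt
    (γ lam : ℝ) (hγ : γ ∈ Set.Ioo (0 : ℝ) 1) (hlam : 0 < lam)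
    (t : ℝ) (ht : 0 < t) :
    HasDerivAt (fun s : ℝ => mittagLeffler γ 1 (-lam * s ^ γ))
      (-lam * t ^ (γ - 1) * mittagLeffler γ γ (-lam * t ^ γ)) t :=
  mittagLeffler_hasDerivAt_general γ lam hγ t ht
end

section
/- Let γ ∈ (0,1), λ > 0, T > 0, and let f : [0,T] → ℝ be continuously differentiable. Define u(t) = ∫_0^t r^{γ-1} E_{γ,γ}(-λ r^γ) f(t-r) dr, where E_{γ,γ} is the Mittag-Leffler function. Then u is differentiable on (0,T) and for every t ∈ (0,T): u'(t) = t^{γ-1} E_{γ,γ}(-λ t^γ) f(0) + ∫_0^t r^{γ-1} E_{γ,γ}(-λ r^γ) f'(t-r) dr. -/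
/-!
Write `g r = r ^ (γ - 1) * E_{γ,γ}(-λ r ^ γ)`. The power series of `E_{γ,μ}` has infinite
radius by the ratio test, since log-convexity of `Γ` gives `Γ x / Γ (x + γ) ≤ (x - 1) ^ (-γ) → 0`;
hence `g` is continuous on `(0, ∞)` and integrable at `0`. Extend `f` to a `C¹` function on `ℝ`
and, for `s` near `t`, split
`u s = ∫_0^t g r f (s - r) dr + ∫_t^s g r f 0 dr + ∫_t^s g r (f (s - r) - f 0) dr`.
The first term is differentiated under the integral sign, the second by the fundamental theorem
of calculus, and the third is `O((s - t)²)`.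
-/

open MeasureTheory Real Set

open Filter Topology

namespace Real

theorem sub_one_rpow_le_Gamma_add_div_Gamma {x γ : ℝ} (hx : 1 < x) (hγ : 0 < γ) :
    (x - 1) ^ γ ≤ Gamma (x + γ) / Gamma x := by
  have hΓx : 0 < Gamma x := Gamma_pos_of_pos (by linarith)
  have hΓxγ : 0 < Gamma (x + γ) := Gamma_pos_of_pos (by linarith)
  have hlog : log (Gamma x) - log (Gamma (x - 1)) = log (x - 1) := by
    have h := Gamma_add_one (s := x - 1) (by linarith)
    rw [sub_add_cancel] at h
    rw [h, log_mul (by linarith) (Gamma_pos_of_pos (by linarith)).ne', add_sub_cancel_right]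
  have hslope := convexOn_log_Gamma.slope_mono_adjacent (x := x - 1) (y := x) (z := x + γ)
    (mem_Ioi.2 (by linarith)) (mem_Ioi.2 (by linarith)) (by linarith) (by linarith)
  simp only [Function.comp_apply, sub_sub_cancel, div_one, add_sub_cancel_left, hlog] at hslope
  rw [le_div_iff₀ hγ] at hslope
  rw [← log_le_log_iff (rpow_pos_of_pos (by linarith) γ) (div_pos hΓxγ hΓx),
    log_rpow (by linarith), log_div hΓxγ.ne' hΓx.ne']
  linarith

theorem tendsto_Gamma_div_Gamma_add_atTop {γ : ℝ} (hγ : 0 < γ) :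
    Tendsto (fun x => Gamma x / Gamma (x + γ)) atTop (𝓝 0) := by
  have hbound : Tendsto (fun x : ℝ => (x - 1) ^ (-γ)) atTop (𝓝 0) :=
    (tendsto_rpow_neg_atTop hγ).comp (tendsto_atTop_add_const_right _ _ tendsto_id)
  refine tendsto_of_tendsto_of_tendsto_of_le_of_le' tendsto_const_nhds hbound ?_ ?_
  · filter_upwards [eventually_gt_atTop 0] with x hx
    exact div_nonneg (Gamma_pos_of_pos hx).le (Gamma_pos_of_pos (by linarith)).le
  · filter_upwards [eventually_gt_atTop 1] with x hx
    rw [← inv_div, rpow_neg (by linarith)]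
    exact inv_anti₀ (rpow_pos_of_pos (by linarith) γ)
      (sub_one_rpow_le_Gamma_add_div_Gamma hx hγ)

end Real

noncomputable def mittagLefflerSeries (γ μ : ℝ) : FormalMultilinearSeries ℝ ℝ ℝ :=
  .ofScalars ℝ fun k : ℕ => (Gamma (γ * k + μ))⁻¹

theorem mittagLeffler_eq_sum (γ μ : ℝ) :
    mittagLeffler γ μ = (mittagLefflerSeries γ μ).sum := by
  ext z
  rw [mittagLefflerSeries, ← FormalMultilinearSeries.ofScalarsSum,
    FormalMultilinearSeries.ofScalars_sum_eq]
  exact tsum_congr fun k => by rw [smul_eq_mul, div_eq_inv_mul]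

theorem mittagLefflerSeries_radius_eq_top {γ : ℝ} (hγ : 0 < γ) (μ : ℝ) :
    (mittagLefflerSeries γ μ).radius = ⊤ := by
  have hx : Tendsto (fun k : ℕ => γ * k + μ) atTop atTop :=
    tendsto_atTop_add_const_right _ _
      (tendsto_natCast_atTop_atTop.const_mul_atTop hγ)
  refine FormalMultilinearSeries.ofScalars_radius_eq_top_of_tendsto ℝ _ ?_ ?_
  · filter_upwards [hx.eventually_gt_atTop 0] with k hk
    exact inv_ne_zero (Gamma_pos_of_pos hk).ne'
  · have := ((Real.tendsto_Gamma_div_Gamma_add_atTop hγ).comp hx).norm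
    rw [norm_zero] at this
    refine this.congr fun k => ?_
    simp only [Function.comp_apply, norm_inv, norm_div, Nat.cast_succ, mul_add_one]
    rw [add_right_comm, inv_div_inv]

theorem continuous_mittagLeffler {γ : ℝ} (hγ : 0 < γ) (μ : ℝ) :
    Continuous (mittagLeffler γ μ) := by
  rw [mittagLeffler_eq_sum, ← continuousOn_univ, ← Metric.eball_top 0,
    ← mittagLefflerSeries_radius_eq_top hγ μ]
  exact FormalMultilinearSeries.continuousOn

section Convolution

variable {g F F' : ℝ → ℝ}

theorem hasDerivAt_integral_mul_comp_sub {a b : ℝ} (hg : IntervalIntegrable g volume a b)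
    (hF : ∀ x, HasDerivAt F (F' x) x) (hF' : Continuous F') (t : ℝ) :
    HasDerivAt (fun s => ∫ r in a..b, g r * F (s - r)) (∫ r in a..b, g r * F' (t - r)) t := by
  have hFc : Continuous F := continuous_iff_continuousAt.2 fun x => (hF x).continuousAt
  obtain ⟨M, hM⟩ := (isCompact_Icc (a := t - 1 - max a b) (b := t + 1 - min a b))
    |>.exists_bound_of_continuousOn hF'.continuousOn
  have hbound :
      ∀ r ∈ uIoc a b, ∀ s ∈ Metric.ball t 1, ‖g r * F' (s - r)‖ ≤ ‖g r‖ * M := by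
    intro r hr s hs
    rw [norm_mul]
    refine mul_le_mul_of_nonneg_left (hM _ ?_) (norm_nonneg _)
    rw [Metric.mem_ball, Real.dist_eq, abs_lt] at hs
    have := min_le_left a b; have := min_le_right a b
    have := le_max_left a b; have := le_max_right a b
    rcases mem_uIoc.1 hr with ⟨h₁, h₂⟩ | ⟨h₁, h₂⟩ <;> constructor <;> linarith
  have hgm := hg.def'.aestronglyMeasurable
  refine (intervalIntegral.hasDerivAt_integral_of_dominated_loc_of_deriv_le
    (Metric.ball_mem_nhds t one_pos)
    (Eventually.of_forall fun s =>
      hgm.mul (hFc.comp (continuous_sub_left s)).aestronglyMeasurable)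
    (hg.mul_continuousOn (hFc.comp (continuous_sub_left t)).continuousOn)
    (hgm.mul (hF'.comp (continuous_sub_left t)).aestronglyMeasurable)
    (ae_of_all _ hbound) (hg.norm.mul_const M)
    (ae_of_all _ fun r _ s _ => ((hF (s - r)).comp_sub_const s r).const_mul (g r))).2

theorem hasDerivAt_integral_mul_comp_sub_sub_zero {t : ℝ} (hg : ContinuousAt g t)
    (hF : DifferentiableAt ℝ F 0) :
    HasDerivAt (fun s => ∫ r in t..s, g r * (F (s - r) - F 0)) 0 t := by
  obtain ⟨c, hc0, hc⟩ := hF.hasDerivAt.isBigO_sub.exists_pos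
  obtain ⟨ε, hε, hFε⟩ := Metric.eventually_nhds_iff.1 hc.bound
  obtain ⟨δ, hδ, hgδ⟩ := Metric.eventually_nhds_iff.1
    (hg.norm.eventually (gt_mem_nhds (lt_add_one ‖g t‖)))
  -- the integrand is `O(s - t)` on an interval of length `|s - t|`
  have hO :
      (fun s => ∫ r in t..s, g r * (F (s - r) - F 0)) =O[𝓝 t] fun s => ‖s - t‖ ^ 2 := by
    refine Asymptotics.IsBigO.of_bound ((‖g t‖ + 1) * c) ?_
    filter_upwards [Metric.ball_mem_nhds t (lt_min hε hδ)] with s hs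
    rw [Metric.mem_ball, Real.dist_eq, lt_min_iff] at hs
    have hbound :
        ∀ r ∈ uIoc t s, ‖g r * (F (s - r) - F 0)‖ ≤ (‖g t‖ + 1) * (c * |s - t|) := by
      intro r hr
      have hrt : |r - t| ≤ |s - t| ∧ |s - r| ≤ |s - t| := by
        rcases mem_uIoc.1 hr with ⟨h₁, h₂⟩ | ⟨h₁, h₂⟩ <;>
          constructor <;> rw [abs_le] <;> constructor <;>
          cases abs_cases (s - t) <;> linarith
      have hgr := hgδ (show dist r t < δ by rw [Real.dist_eq]; linarith)
      have hFr := hFε (show dist (s - r) 0 < ε by rw [Real.dist_eq, sub_zero]; linarith)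
      rw [sub_zero, Real.norm_eq_abs] at hFr
      rw [norm_mul]
      exact mul_le_mul hgr.le (hFr.trans (mul_le_mul_of_nonneg_left hrt.2 hc0.le))
        (norm_nonneg _) (by positivity)
    calc ‖∫ r in t..s, g r * (F (s - r) - F 0)‖
        ≤ (‖g t‖ + 1) * (c * |s - t|) * |s - t| :=
          intervalIntegral.norm_integral_le_of_norm_le_const hbound
      _ = (‖g t‖ + 1) * c * ‖‖s - t‖ ^ 2‖ := by
          simp only [norm_pow, Real.norm_eq_abs, abs_abs]; ring
  rw [hasDerivAt_iff_isLittleO]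
  simpa using hO.trans_isLittleO (Asymptotics.isLittleO_pow_sub_sub t one_lt_two)

theorem hasDerivAt_integral_zero_mul_comp_sub {t : ℝ} (ht : 0 < t)
    (hg : IntervalIntegrable g volume 0 t) (hgc : ContinuousOn g (Ioi 0))
    (hF : ∀ x, HasDerivAt F (F' x) x) (hF' : Continuous F') :
    HasDerivAt (fun s => ∫ r in 0..s, g r * F (s - r))
      (g t * F 0 + ∫ r in 0..t, g r * F' (t - r)) t := by
  have hFc : Continuous F := continuous_iff_continuousAt.2 fun x => (hF x).continuousAt
  have hgt : ContinuousAt g t := hgc.continuousAt (Ioi_mem_nhds ht)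
  have hsplit : (fun s => ∫ r in 0..s, g r * F (s - r)) =ᶠ[𝓝 t] fun s =>
      (∫ r in 0..t, g r * F (s - r)) +
        ((∫ r in t..s, g r * F 0) + ∫ r in t..s, g r * (F (s - r) - F 0)) := by
    filter_upwards [Ioi_mem_nhds ht] with s hs
    have hgts : ContinuousOn g (uIcc t s) :=
      hgc.mono fun r hr => lt_of_lt_of_le (lt_min ht hs) hr.1
    have hFs : Continuous fun r => F (s - r) := hFc.comp (continuous_sub_left s)
    have hfrozen : IntervalIntegrable (fun r => g r * F 0) volume t s :=
      (hgts.mul continuousOn_const).intervalIntegrable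
    have hincr : IntervalIntegrable (fun r => g r * (F (s - r) - F 0)) volume t s :=
      (hgts.mul (hFs.continuousOn.sub continuousOn_const)).intervalIntegrable
    rw [← intervalIntegral.integral_add hfrozen hincr,
      ← intervalIntegral.integral_add_adjacent_intervals (hg.mul_continuousOn hFs.continuousOn)
        (hgts.mul hFs.continuousOn).intervalIntegrable]
    congr 1
    exact intervalIntegral.integral_congr fun r _ => by ring
  have hmoving : HasDerivAt (fun s => ∫ r in t..s, g r * F 0) (g t * F 0) t :=
    intervalIntegral.integral_hasDerivAt_right IntervalIntegrable.refl
      ((hgc.mul continuousOn_const).stronglyMeasurableAtFilter isOpen_Ioi t ht)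
      (hgt.mul continuousAt_const)
  refine ((hasDerivAt_integral_mul_comp_sub hg hF hF' t).add
    (hmoving.add (hasDerivAt_integral_mul_comp_sub_sub_zero hgt
      (hF 0).differentiableAt))).congr_of_eventuallyEq hsplit |>.congr_deriv ?_
  ring

theorem integral_mul_comp_sub_congr {φ ψ : ℝ → ℝ} {s T : ℝ} (hs : s ∈ Icc 0 T)
    (h : EqOn φ ψ (Icc 0 T)) :
    ∫ r in 0..s, g r * φ (s - r) = ∫ r in 0..s, g r * ψ (s - r) := by
  refine intervalIntegral.integral_congr fun r hr => ?_
  rw [uIcc_of_le hs.1] at hr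
  rw [h ⟨by linarith [hr.2], by linarith [hr.1, hs.2]⟩]

end Convolution

theorem exists_hasDerivAt_eqOn_Icc {a b : ℝ} (hab : a ≤ b) {f f' : ℝ → ℝ}
    (hf : ContinuousOn f (Icc a b)) (hderiv : ∀ x ∈ Ioo a b, HasDerivAt f (f' x) x)
    (hf' : ContinuousOn f' (Icc a b)) :
    ∃ F F' : ℝ → ℝ, (∀ x, HasDerivAt F (F' x) x) ∧ Continuous F' ∧
      EqOn F f (Icc a b) ∧ EqOn F' f' (Icc a b) := by
  set F' : ℝ → ℝ := fun x => f' (projIcc a b hab x)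
  have hF'c : Continuous F' :=
    hf'.comp_continuous (continuous_subtype_val.comp continuous_projIcc) fun x =>
      (projIcc a b hab x).2
  have hF'f' : EqOn F' f' (Icc a b) := fun x hx => by simp only [F', projIcc_of_mem hab hx]
  refine ⟨fun x => f a + ∫ y in a..x, F' y, F', fun x => ?_, hF'c, fun x hx => ?_, hF'f'⟩
  · exact ((hF'c.integral_hasStrictDerivAt a x).hasDerivAt).const_add _
  · have hsub : Icc a x ⊆ Icc a b := Icc_subset_Icc_right hx.2
    change f a + _ = f x
    rw [intervalIntegral.integral_eq_sub_of_hasDerivAt_of_le hx.1 (hf.mono hsub)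
      (fun y hy => hF'f' (hsub (Ioo_subset_Icc_self hy)) ▸
        hderiv y (Ioo_subset_Ioo_right hx.2 hy))
      (hF'c.intervalIntegrable _ _)]
    ring

theorem duhamel_hasDerivAt_general
    (γ lam T : ℝ) (hγ : γ ∈ Set.Ioo (0 : ℝ) 1)
    (f f' : ℝ → ℝ)
    (hf : ∀ t ∈ Set.Icc (0 : ℝ) T, HasDerivAt f (f' t) t)
    (hf' : ContinuousOn f' (Set.Icc 0 T)) :
    ∀ t ∈ Set.Ioo (0 : ℝ) T,
      HasDerivAt
        (fun s : ℝ =>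
          ∫ r in (0 : ℝ)..s, r ^ (γ - 1) * mittagLeffler γ γ (-(lam * r ^ γ)) * f (s - r))
        (t ^ (γ - 1) * mittagLeffler γ γ (-(lam * t ^ γ)) * f 0 +
          ∫ r in (0 : ℝ)..t, r ^ (γ - 1) * mittagLeffler γ γ (-(lam * r ^ γ)) * f' (t - r))
        t := by
  intro t ht
  obtain ⟨F, F', hF, hF'c, hFf, hF'f'⟩ := exists_hasDerivAt_eqOn_Icc (ht.1.trans ht.2).le
    (fun x hx => (hf x hx).continuousAt.continuousWithinAt)
    (fun x hx => hf x (Ioo_subset_Icc_self hx)) hf'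
  have hE : Continuous fun r : ℝ => mittagLeffler γ γ (-(lam * r ^ γ)) :=
    (continuous_mittagLeffler hγ.1 γ).comp
      (continuous_const.mul (continuous_rpow_const hγ.1.le)).neg
  set g : ℝ → ℝ := fun r => r ^ (γ - 1) * mittagLeffler γ γ (-(lam * r ^ γ))
  have hg : IntervalIntegrable g volume 0 t :=
    (intervalIntegral.intervalIntegrable_rpow' (by linarith [hγ.1])).mul_continuousOn
      hE.continuousOn
  have hgc : ContinuousOn g (Ioi 0) :=
    (continuousOn_id.rpow_const fun r hr => Or.inl hr.ne').mul hE.continuousOn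
  have hu := hasDerivAt_integral_zero_mul_comp_sub ht.1 hg hgc hF hF'c
  rw [integral_mul_comp_sub_congr ⟨ht.1.le, ht.2.le⟩ hF'f',
    hFf ⟨le_rfl, (ht.1.trans ht.2).le⟩] at hu
  refine hu.congr_of_eventuallyEq ?_
  filter_upwards [Ioo_mem_nhds ht.1 ht.2] with s hs
  exact (integral_mul_comp_sub_congr (Ioo_subset_Icc_self hs) hFf).symm

/-- Differentiability of the Duhamel representation
`u(t) = ∫_0^t r^{γ-1} E_{γ,γ}(-λr^γ) f(t-r) dr` of the solution of the scalar Caputo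
problem `∂_t^γ u + λ u = f`, `u(0) = 0`, together with the formula
`u'(t) = t^{γ-1} E_{γ,γ}(-λt^γ) f(0) + ∫_0^t r^{γ-1} E_{γ,γ}(-λr^γ) f'(t-r) dr`. -/
theorem duhamel_hasDerivAt
    (γ lam T : ℝ) (hγ : γ ∈ Set.Ioo (0 : ℝ) 1) (hlam : 0 < lam) (hT : 0 < T)
    (f f' : ℝ → ℝ)
    (hf : ∀ t ∈ Set.Icc (0 : ℝ) T, HasDerivAt f (f' t) t)
    (hf' : ContinuousOn f' (Set.Icc 0 T)) :
    ∀ t ∈ Set.Ioo (0 : ℝ) T,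
      HasDerivAt
        (fun s : ℝ =>
          ∫ r in (0 : ℝ)..s, r ^ (γ - 1) * mittagLeffler γ γ (-(lam * r ^ γ)) * f (s - r))
        (t ^ (γ - 1) * mittagLeffler γ γ (-(lam * t ^ γ)) * f 0 +
          ∫ r in (0 : ℝ)..t, r ^ (γ - 1) * mittagLeffler γ γ (-(lam * r ^ γ)) * f' (t - r))
        t :=
  duhamel_hasDerivAt_general γ lam T hγ f f' hf hf'
end

section
/- Let γ ∈ (0,1), λ > 0, T > 0, C ≥ 0, and assume |E_{γ,γ}(-x)| ≤ C for all x ≥ 0, where E_{γ,γ} is the Mittag-Leffler function. Let f : [0,T] → ℝ be continuously differentiable and define u(t) = ∫_0^t r^{γ-1} E_{γ,γ}(-λ r^γ) f(t-r) dr. Then for every t ∈ (0,T): |u'(t)| ≤ C t^{γ-1} |f(0)| + (C/γ) t^γ sup_{s ∈ [0,T]} |f'(s)|. (This is the scalar form of the time-regularity estimate ‖∂_t u(·,t)‖ ≲ t^{γ-1} A(u_0,f) for solutions of the fractional-in-time problem with vanishing initial datum.) -/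
open MeasureTheory Real Set

/-!
Split `u(s) - u(t) = ∫₀ᵗ k(r) (f(s-r) - f(t-r)) dr + ∫ₜˢ k(r) f(s-r) dr` for the kernel
`k(r) = r^{γ-1} E_{γ,γ}(-λ r^γ)`, which satisfies `|k(r)| ≤ C r^{γ-1}`. Since `f` is Lipschitz with
constant `M = sup |f'|`, the first piece is at most `C M (s-t) t^γ/γ` and the second at most
`C (|f 0| + M (s-t)) (s^γ - t^γ)/γ`. Dividing by `s - t` and letting `s ↓ t`, the difference
quotient of `r ↦ r^γ` produces the singular term `C t^{γ-1} |f 0|`.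
-/

open Filter Topology
open scoped NNReal

@[fun_prop]
lemma measurable_mittagLeffler (γ μ : ℝ) : Measurable (mittagLeffler γ μ) :=
  Measurable.tsum fun _ => (measurable_id.pow_const _).div_const _

lemma abs_rpow_mul_mittagLeffler_le {γ lam C : ℝ} (hlam : 0 ≤ lam)
    (hE : ∀ x : ℝ, 0 ≤ x → |mittagLeffler γ γ (-x)| ≤ C) {r : ℝ} (hr : 0 ≤ r) :
    |r ^ (γ - 1) * mittagLeffler γ γ (-(lam * r ^ γ))| ≤ C * r ^ (γ - 1) := by
  rw [abs_mul, abs_of_nonneg (rpow_nonneg hr _), mul_comm C]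
  exact mul_le_mul_of_nonneg_left (hE _ (by positivity)) (rpow_nonneg hr _)

lemma HasDerivAt.abs_le_of_abs_slope_le {u B : ℝ → ℝ} {d L t : ℝ} (hd : HasDerivAt u d t)
    (hB : Tendsto B (𝓝[>] t) (𝓝 L)) (hle : ∀ᶠ s in 𝓝[>] t, |slope u t s| ≤ B s) : |d| ≤ L := by
  have hslope : Tendsto (fun s => |slope u t s|) (𝓝[>] t) (𝓝 |d|) :=
    (hd.tendsto_slope.mono_left (nhdsWithin_mono t fun _ hs => ne_of_gt hs)).abs
  exact le_of_tendsto_of_tendsto hslope hB hle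

noncomputable def duhamel (k f : ℝ → ℝ) (s : ℝ) : ℝ :=
  ∫ r in (0 : ℝ)..s, k r * f (s - r)

section WeaklySingularKernel

variable {k : ℝ → ℝ} {γ C : ℝ} (hk : AEStronglyMeasurable k)
  (hkC : ∀ r, 0 < r → |k r| ≤ C * r ^ (γ - 1)) (hγ : 0 < γ)
include hk hkC hγ

lemma intervalIntegrable_of_abs_le_rpow {a b : ℝ} (ha : 0 ≤ a) (hb : 0 ≤ b) :
    IntervalIntegrable k volume a b := by
  refine ((intervalIntegral.intervalIntegrable_rpow' (by linarith : -1 < γ - 1)).const_mul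
    C).mono_fun hk.restrict ?_
  filter_upwards [ae_restrict_mem measurableSet_uIoc] with r hr
  have hr0 : 0 < r := lt_of_le_of_lt (le_min ha hb) hr.1
  rw [norm_eq_abs, norm_eq_abs]
  exact (hkC r hr0).trans (le_abs_self _)

omit hk in
lemma abs_integral_mul_le_of_abs_le_rpow {g : ℝ → ℝ} {a b K : ℝ} (ha : 0 ≤ a) (hab : a ≤ b)
    (hg : ∀ r ∈ Ioc a b, |g r| ≤ K) :
    |∫ r in a..b, k r * g r| ≤ C * K * ((b ^ γ - a ^ γ) / γ) := by
  have hbound : ∀ r ∈ Ioc a b, ‖k r * g r‖ ≤ C * K * r ^ (γ - 1) := fun r hr => by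
    have hr0 : 0 < r := ha.trans_lt hr.1
    rw [norm_eq_abs, abs_mul, mul_right_comm]
    exact mul_le_mul (hkC r hr0) (hg r hr) (abs_nonneg _) ((abs_nonneg _).trans (hkC r hr0))
  calc |∫ r in a..b, k r * g r|
      ≤ ∫ r in a..b, C * K * r ^ (γ - 1) :=
        intervalIntegral.norm_integral_le_of_norm_le hab (ae_of_all _ hbound)
          ((intervalIntegral.intervalIntegrable_rpow' (by linarith)).const_mul _)
    _ = C * K * ((b ^ γ - a ^ γ) / γ) := by
        rw [intervalIntegral.integral_const_mul, integral_rpow (Or.inl (by linarith)),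
          sub_add_cancel]

lemma intervalIntegrable_mul_comp_sub {f : ℝ → ℝ} {a b s : ℝ} (ha : 0 ≤ a) (hab : a ≤ b)
    (hbs : b ≤ s) (hf : ContinuousOn f (Icc 0 s)) :
    IntervalIntegrable (fun r => k r * f (s - r)) volume a b := by
  refine (intervalIntegrable_of_abs_le_rpow hk hkC hγ ha (ha.trans hab)).mul_continuousOn
    (hf.comp (continuousOn_const.sub continuousOn_id) fun r hr => ?_)
  rw [uIcc_of_le hab] at hr
  exact ⟨by linarith [hr.2], by linarith [hr.1]⟩

lemma duhamel_sub_eq {f : ℝ → ℝ} {s t : ℝ} (ht : 0 ≤ t) (hts : t ≤ s)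
    (hf : ContinuousOn f (Icc 0 s)) :
    duhamel k f s - duhamel k f t =
      (∫ r in (0 : ℝ)..t, k r * (f (s - r) - f (t - r))) + ∫ r in t..s, k r * f (s - r) := by
  have hs_t := intervalIntegrable_mul_comp_sub hk hkC hγ le_rfl ht hts hf
  have ht_t := intervalIntegrable_mul_comp_sub hk hkC hγ le_rfl ht le_rfl (hf.mono
    (Icc_subset_Icc_right hts))
  have hs_ts := intervalIntegrable_mul_comp_sub hk hkC hγ ht hts le_rfl hf
  simp only [duhamel, mul_sub, intervalIntegral.integral_sub hs_t ht_t,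
    ← intervalIntegral.integral_add_adjacent_intervals hs_t hs_ts]
  ring

lemma abs_duhamel_sub_le {f : ℝ → ℝ} {M : ℝ≥0} {s t : ℝ} (ht : 0 ≤ t) (hts : t ≤ s)
    (hf : LipschitzOnWith M f (Icc 0 s)) :
    |duhamel k f s - duhamel k f t| ≤
      C * (|f 0| + M * (s - t)) * ((s ^ γ - t ^ γ) / γ) + C * (M * (s - t)) * (t ^ γ / γ) := by
  have hlip : ∀ x ∈ Icc 0 s, ∀ y ∈ Icc 0 s, |f x - f y| ≤ M * |x - y| := fun x hx y hy => by
    simpa only [Real.dist_eq] using hf.dist_le_mul x hx y hy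
  have h0 : (0 : ℝ) ∈ Icc 0 s := ⟨le_rfl, ht.trans hts⟩
  have hpast : |∫ r in (0 : ℝ)..t, k r * (f (s - r) - f (t - r))| ≤
      C * (M * (s - t)) * (t ^ γ / γ) := by
    have := abs_integral_mul_le_of_abs_le_rpow hkC hγ le_rfl ht (K := M * (s - t))
      (g := fun r => f (s - r) - f (t - r)) fun r hr => by
        have := hlip (s - r) ⟨by linarith [hr.2], by linarith [hr.1]⟩
          (t - r) ⟨by linarith [hr.2], by linarith [hr.1]⟩
        rwa [sub_sub_sub_cancel_right, abs_of_nonneg (sub_nonneg.2 hts)] at this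
    rwa [zero_rpow hγ.ne', sub_zero] at this
  have hrecent : |∫ r in t..s, k r * f (s - r)| ≤
      C * (|f 0| + M * (s - t)) * ((s ^ γ - t ^ γ) / γ) :=
    abs_integral_mul_le_of_abs_le_rpow hkC hγ ht hts fun r hr => by
      have := hlip (s - r) ⟨by linarith [hr.2], by linarith [hr.1]⟩ 0 h0
      rw [sub_zero, abs_of_nonneg (a := s - r) (by linarith [hr.2])] at this
      have hM : (M : ℝ) * (s - r) ≤ M * (s - t) := by gcongr; linarith [hr.1]
      linarith [abs_sub_abs_le_abs_sub (f (s - r)) (f 0)]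
  rw [duhamel_sub_eq hk hkC hγ ht hts hf.continuousOn]
  linarith [abs_add_le (∫ r in (0 : ℝ)..t, k r * (f (s - r) - f (t - r)))
    (∫ r in t..s, k r * f (s - r))]

lemma abs_le_of_hasDerivAt_duhamel {f : ℝ → ℝ} {M : ℝ≥0} {T t d : ℝ}
    (hf : LipschitzOnWith M f (Icc 0 T)) (ht : t ∈ Ioo 0 T)
    (hd : HasDerivAt (duhamel k f) d t) :
    |d| ≤ C * t ^ (γ - 1) * |f 0| + C / γ * t ^ γ * M := by
  obtain ⟨ht0, htT⟩ := ht
  set B : ℝ → ℝ := fun s =>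
    C * (|f 0| + M * (s - t)) * (slope (· ^ γ) t s / γ) + C * M * (t ^ γ / γ)
  have hB : Tendsto B (𝓝[>] t) (𝓝 (C * t ^ (γ - 1) * |f 0| + C / γ * t ^ γ * M)) := by
    have hlin : Tendsto (fun s => C * (|f 0| + M * (s - t))) (𝓝[>] t) (𝓝 (C * |f 0|)) := by
      simpa using ((by fun_prop : Continuous fun s => C * (|f 0| + M * (s - t))).tendsto
        t).mono_left nhdsWithin_le_nhds
    have hpow := (hasDerivAt_rpow_const (p := γ) (Or.inl ht0.ne')).tendsto_slope.mono_left
      (nhdsWithin_mono t fun _ hs => ne_of_gt hs)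
    convert (hlin.mul (hpow.div_const γ)).add tendsto_const_nhds using 2
    field_simp
  refine hd.abs_le_of_abs_slope_le hB ?_
  filter_upwards [Ioo_mem_nhdsGT htT] with s hs
  have hst : 0 < s - t := sub_pos.2 hs.1
  have := abs_duhamel_sub_le hk hkC hγ ht0.le hs.1.le (hf.mono (Icc_subset_Icc_right hs.2.le))
  rw [slope_def_field, abs_div, abs_of_pos hst, div_le_iff₀ hst]
  refine this.trans_eq ?_
  simp only [B, slope_def_field]
  field_simp

end WeaklySingularKernel

theorem duhamel_derivative_bound_general
    (γ lam T C : ℝ) (hγ : γ ∈ Set.Ioo (0 : ℝ) 1) (hlam : 0 < lam)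
    (hE : ∀ x : ℝ, 0 ≤ x → |mittagLeffler γ γ (-x)| ≤ C)
    (f f' : ℝ → ℝ)
    (hf : ∀ t ∈ Set.Icc (0 : ℝ) T, HasDerivAt f (f' t) t)
    (hf' : ContinuousOn f' (Set.Icc 0 T)) :
    ∀ t ∈ Set.Ioo (0 : ℝ) T, ∀ d : ℝ,
      HasDerivAt
        (fun s : ℝ =>
          ∫ r in (0 : ℝ)..s, r ^ (γ - 1) * mittagLeffler γ γ (-(lam * r ^ γ)) * f (s - r))
        d t →
      |d| ≤ C * t ^ (γ - 1) * |f 0| +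
          C / γ * t ^ γ * ⨆ s : Set.Icc (0 : ℝ) T, |f' (s : ℝ)| := by
  intro t ht d hd
  set M := ⨆ s : Set.Icc (0 : ℝ) T, |f' (s : ℝ)|
  have hbdd : BddAbove (range fun s : Icc (0 : ℝ) T => |f' s|) := by
    simpa only [image_eq_range] using (isCompact_Icc.image_of_continuousOn hf'.abs).bddAbove
  have hM0 : 0 ≤ M := (abs_nonneg _).trans (le_ciSup hbdd ⟨t, ht.1.le, ht.2.le⟩)
  have hlip : LipschitzOnWith ⟨M, hM0⟩ f (Icc 0 T) :=
    (convex_Icc 0 T).lipschitzOnWith_of_nnnorm_hasDerivWithin_le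
      (fun x hx => (hf x hx).hasDerivWithinAt) fun x hx =>
        NNReal.coe_le_coe.1 (le_ciSup hbdd ⟨x, hx⟩)
  have hk : Measurable fun r : ℝ => r ^ (γ - 1) * mittagLeffler γ γ (-(lam * r ^ γ)) := by
    fun_prop
  exact abs_le_of_hasDerivAt_duhamel hk.aestronglyMeasurable
    (fun r hr => abs_rpow_mul_mittagLeffler_le hlam.le hE hr.le) hγ.1 hlip ht hd

/-- Time-regularity estimate for the Duhamel representation
`u(t) = ∫_0^t r^{γ-1} E_{γ,γ}(-λr^γ) f(t-r) dr` of the solution of the scalar Caputo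
problem `∂_t^γ u + λ u = f`, `u(0) = 0`: any derivative `d` of `u` at `t ∈ (0,T)`
satisfies `|d| ≤ C t^{γ-1} |f(0)| + (C/γ) t^γ sup_{[0,T]} |f'|`. -/
theorem duhamel_derivative_bound
    (γ lam T C : ℝ) (hγ : γ ∈ Set.Ioo (0 : ℝ) 1) (hlam : 0 < lam) (hT : 0 < T)
    (hC : 0 ≤ C)
    (hE : ∀ x : ℝ, 0 ≤ x → |mittagLeffler γ γ (-x)| ≤ C)
    (f f' : ℝ → ℝ)
    (hf : ∀ t ∈ Set.Icc (0 : ℝ) T, HasDerivAt f (f' t) t)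
    (hf' : ContinuousOn f' (Set.Icc 0 T)) :
    ∀ t ∈ Set.Ioo (0 : ℝ) T, ∀ d : ℝ,
      HasDerivAt
        (fun s : ℝ =>
          ∫ r in (0 : ℝ)..s, r ^ (γ - 1) * mittagLeffler γ γ (-(lam * r ^ γ)) * f (s - r))
        d t →
      |d| ≤ C * t ^ (γ - 1) * |f 0| +
          C / γ * t ^ γ * ⨆ s : Set.Icc (0 : ℝ) T, |f' (s : ℝ)| :=
  duhamel_derivative_bound_general γ lam T C hγ hlam hE f f' hf hf'
end
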